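/- arXiv:1004.2959 — 2 statements merged into one kernel-verified Lean document; each statement's English description precedes it below -/
import Mathlib

section
/- Let L be a Lie algebra over ℝ (not necessarily finite-dimensional) and let N : L → L be a Nijenhuis operator. Then for every t ∈ ℝ the bracket [u,v]_t := [u,v] + t·[u,v]_N satisfies the Jacobi identity; that is, the family [·,·]_t is a 1-parameter deformation of the Lie algebra L. -/
/-- The deformed bracket `[u,v]_N = [Nu,v] + [u,Nv] - N[u,v]` associated to a linear
map `N` on a Lie algebra. -/
def nijBracket {L : Type*} [LieRing L] [LieAlgebra ℝ L]
    (N : L →ₗ[ℝ] L) (u v : L) : L :=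
  ⁅N u, v⁆ + ⁅u, N v⁆ - N ⁅u, v⁆

/-- If `N` is a Nijenhuis operator then for every `t` the bracket
`[u,v]_t = [u,v] + t • [u,v]_N` satisfies the Jacobi identity. -/
theorem nijenhuis_one_parameter_deformation_jacobi
    (L : Type*) [LieRing L] [LieAlgebra ℝ L] (N : L →ₗ[ℝ] L)
    (hN : ∀ u v : L, ⁅N u, N v⁆ = N (nijBracket N u v)) :
    ∀ t : ℝ, ∀ u v w : L,
      (⁅(⁅u, v⁆ + t • nijBracket N u v), w⁆
          + t • nijBracket N (⁅u, v⁆ + t • nijBracket N u v) w)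
      + (⁅(⁅v, w⁆ + t • nijBracket N v w), u⁆
          + t • nijBracket N (⁅v, w⁆ + t • nijBracket N v w) u)
      + (⁅(⁅w, u⁆ + t • nijBracket N w u), v⁆
          + t • nijBracket N (⁅w, u⁆ + t • nijBracket N w u) v) = 0 := by
  intro t u v w
  have jac : ∀ a b c : L, ⁅⁅a,b⁆,c⁆ + ⁅⁅b,c⁆,a⁆ + ⁅⁅c,a⁆,b⁆ = 0 := by
    intro a b c
    have h := lie_jacobi a b c
    rw [← lie_skew a ⁅b,c⁆, ← lie_skew b ⁅c,a⁆, ← lie_skew c ⁅a,b⁆] at h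
    linear_combination (norm := abel) -h
  have key :
      (⁅(⁅u, v⁆ + t • nijBracket N u v), w⁆
          + t • nijBracket N (⁅u, v⁆ + t • nijBracket N u v) w)
      + (⁅(⁅v, w⁆ + t • nijBracket N v w), u⁆
          + t • nijBracket N (⁅v, w⁆ + t • nijBracket N v w) u)
      + (⁅(⁅w, u⁆ + t • nijBracket N w u), v⁆
          + t • nijBracket N (⁅w, u⁆ + t • nijBracket N w u) v)
      = (⁅⁅u,v⁆,w⁆ + ⁅⁅v,w⁆,u⁆ + ⁅⁅w,u⁆,v⁆)
        + t • ((⁅⁅N u,v⁆,w⁆ + ⁅⁅v,w⁆,N u⁆ + ⁅⁅w,N u⁆,v⁆)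
             + (⁅⁅u,N v⁆,w⁆ + ⁅⁅N v,w⁆,u⁆ + ⁅⁅w,u⁆,N v⁆)
             + (⁅⁅u,v⁆,N w⁆ + ⁅⁅v,N w⁆,u⁆ + ⁅⁅N w,u⁆,v⁆)
             - N (⁅⁅u,v⁆,w⁆ + ⁅⁅v,w⁆,u⁆ + ⁅⁅w,u⁆,v⁆))
        + (t*t) • ((⁅⁅N u,N v⁆,w⁆ + ⁅⁅N v,w⁆,N u⁆ + ⁅⁅w,N u⁆,N v⁆)
             + (⁅⁅N u,v⁆,N w⁆ + ⁅⁅v,N w⁆,N u⁆ + ⁅⁅N w,N u⁆,v⁆)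
             + (⁅⁅u,N v⁆,N w⁆ + ⁅⁅N v,N w⁆,u⁆ + ⁅⁅N w,u⁆,N v⁆)
             - N ((⁅⁅N u,v⁆,w⁆ + ⁅⁅v,w⁆,N u⁆ + ⁅⁅w,N u⁆,v⁆)
                + (⁅⁅u,N v⁆,w⁆ + ⁅⁅N v,w⁆,u⁆ + ⁅⁅w,u⁆,N v⁆)
                + (⁅⁅u,v⁆,N w⁆ + ⁅⁅v,N w⁆,u⁆ + ⁅⁅N w,u⁆,v⁆))
             + N (N (⁅⁅u,v⁆,w⁆ + ⁅⁅v,w⁆,u⁆ + ⁅⁅w,u⁆,v⁆))) := by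
    simp only [nijBracket, hN, lie_add, add_lie, lie_sub, sub_lie, lie_smul, smul_lie,
      map_add, map_sub, map_smul, smul_add, smul_sub]
    module
  rw [key]
  simp only [jac, map_zero, smul_zero, add_zero, zero_add, sub_zero, zero_sub, neg_zero,
    smul_neg]
end

section
/- Let L be a Lie algebra over ℝ (not necessarily finite-dimensional), N : L → L a Nijenhuis operator, and t ∈ ℝ such that the linear map id + tN is bijective. Then id + tN is an isomorphism of Lie algebras from (L, [·,·]_t) to (L, [·,·]), where [u,v]_t := [u,v] + t·[u,v]_N. In particular, the deformation of L by a Nijenhuis operator is trivial. -/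
/-- If `N` is a Nijenhuis operator and `id + tN` is bijective, then
`id + tN` is an isomorphism of Lie algebras from `(L, [·,·]_t)` to `(L, [·,·])`,
where `[u,v]_t = [u,v] + t • [u,v]_N`. -/
theorem nijenhuis_deformation_trivial
    (L : Type*) [LieRing L] [LieAlgebra ℝ L] (N : L →ₗ[ℝ] L)
    (hN : ∀ u v : L, ⁅N u, N v⁆ = N (nijBracket N u v))
    (t : ℝ) (hbij : Function.Bijective (fun u : L => u + t • N u)) :
    Function.Bijective (fun u : L => u + t • N u) ∧
    ∀ u v : L,
      (⁅u, v⁆ + t • nijBracket N u v) + t • N (⁅u, v⁆ + t • nijBracket N u v)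
        = ⁅u + t • N u, v + t • N v⁆ := by
  refine ⟨hbij, fun u v => ?_⟩
  have h := hN u v
  simp only [nijBracket, map_add, map_smul, map_sub, lie_add, add_lie, lie_smul, smul_lie,
    smul_add, smul_sub, smul_smul] at h ⊢
  rw [h, smul_sub, smul_add]
  abel
end
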